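/- arXiv:2412.14689 — 2 statements merged into one kernel-verified Lean document; each statement's English description precedes it below -/
import Mathlib

section
/- Under the iterative data editing process, the edited targets satisfy the expansion Ỹ_{n+1} = X w* + E_1 + Σ_{i=1}^{n} M_i ( X (ŵ_i − w*) + (E_{i+1} − E_1) ). -/
/-!
Subtracting the current targets from both sides of the editing rule gives
`Ỹ_{k+1} = Ỹ_k + M_k (X ŵ_k + E_{k+1} − Ỹ_k)`. By induction `Ỹ_k` is `X w* + E_1` plus a sum
of vectors in the ranges of `M_1, …, M_{k-1}`, all of which `M_k` annihilates by disjointness,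
so `M_k Ỹ_k = M_k (X w* + E_1)` and each step adds exactly the `k`-th summand.
-/

open Matrix Finset

/-- An editing matrix: a real T×T diagonal matrix whose diagonal entries are all 0 or 1. -/
def IsEditingMatrix {T : ℕ} (M : Matrix (Fin T) (Fin T) ℝ) : Prop :=
  ∃ f : Fin T → ℝ, (∀ i, f i = 0 ∨ f i = 1) ∧ M = Matrix.diagonal f

namespace Matrix

variable {m n o ι R : Type*} [Fintype n]

theorem mulVec_sum_mulVec_eq_zero [Fintype o] [NonUnitalSemiring R] {A : Matrix m n R}
    {B : ι → Matrix n o R} {v : ι → o → R} {s : Finset ι} (h : ∀ i ∈ s, A * B i = 0) : A *ᵥ ∑ i ∈ s, B i *ᵥ v i = 0 := by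
  rw [mulVec_sum]
  exact Finset.sum_eq_zero fun i hi => by rw [mulVec_mulVec, h i hi, zero_mulVec]

theorem mulVec_add_one_sub_mulVec_add [DecidableEq n] [Ring R] {M : Matrix n n R} {z b r : n → R}
    (hr : M *ᵥ r = 0) : M *ᵥ z + (1 - M) *ᵥ (b + r) = b + r + M *ᵥ (z - b) := by
  rw [sub_mulVec, one_mulVec, mulVec_add, hr, mulVec_sub]
  abel

end Matrix

theorem edited_targets_expansion_general
    (T d n : ℕ)
    (X : Matrix (Fin T) (Fin d) ℝ)
    (wstar : Fin d → ℝ)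
    (E : ℕ → Fin T → ℝ)
    (M : ℕ → Matrix (Fin T) (Fin T) ℝ)
    (hMdisj : ∀ i j, 1 ≤ i → i ≤ n → 1 ≤ j → j ≤ n → i ≠ j → M i * M j = 0)
    (Ytil : ℕ → Fin T → ℝ) (what : ℕ → Fin d → ℝ)
    (hY1 : Ytil 1 = X *ᵥ wstar + E 1)
    (hYrec : ∀ k, 1 ≤ k → k ≤ n →
      Ytil (k + 1) = (M k) *ᵥ (X *ᵥ what k + E (k + 1)) + (1 - M k) *ᵥ Ytil k) :
    Ytil (n + 1) =
      X *ᵥ wstar + E 1 +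
        ∑ i ∈ Finset.Icc 1 n, (M i) *ᵥ (X *ᵥ (what i - wstar) + (E (i + 1) - E 1)) := by
  suffices h : ∀ k ≤ n, Ytil (k + 1) = X *ᵥ wstar + E 1 +
      ∑ i ∈ Icc 1 k, M i *ᵥ (X *ᵥ (what i - wstar) + (E (i + 1) - E 1)) from h n le_rfl
  intro k
  induction k with
  | zero => simp [hY1]
  | succ k ih =>
    intro hk
    have hdisj : ∀ i ∈ Icc 1 k, M (k + 1) * M i = 0 := fun i hi => by
      obtain ⟨hi1, hik⟩ := mem_Icc.mp hi
      exact hMdisj (k + 1) i (by omega) hk hi1 (by omega) (by omega)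
    rw [hYrec (k + 1) (by omega) hk, ih (by omega),
      mulVec_add_one_sub_mulVec_add (mulVec_sum_mulVec_eq_zero hdisj),
      sum_Icc_succ_top (by omega), add_assoc, mulVec_sub X]
    congr 3
    abel

/-- under the iterative data editing process, the edited targets satisfy
`Ỹ_{n+1} = X w* + E 1 + ∑_{i=1}^n M i (X (ŵ_i − w*) + (E (i+1) − E 1))`. -/
theorem edited_targets_expansion
    (T d n : ℕ) (hT : 0 < T) (hd : 0 < d) (hn : 0 < n)
    (X : Matrix (Fin T) (Fin d) ℝ) (hX : IsUnit (Xᵀ * X).det)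
    (wstar : Fin d → ℝ)
    (E : ℕ → Fin T → ℝ)
    (M : ℕ → Matrix (Fin T) (Fin T) ℝ)
    (hM : ∀ i, 1 ≤ i → i ≤ n → IsEditingMatrix (M i))
    (hMdisj : ∀ i j, 1 ≤ i → i ≤ n → 1 ≤ j → j ≤ n → i ≠ j → M i * M j = 0)
    (Ytil : ℕ → Fin T → ℝ) (what : ℕ → Fin d → ℝ)
    (hY1 : Ytil 1 = X *ᵥ wstar + E 1)
    (hw : ∀ k, 1 ≤ k → k ≤ n + 1 → what k = (Xᵀ * X)⁻¹ *ᵥ (Xᵀ *ᵥ Ytil k))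
    (hYrec : ∀ k, 1 ≤ k → k ≤ n →
      Ytil (k + 1) = (M k) *ᵥ (X *ᵥ what k + E (k + 1)) + (1 - M k) *ᵥ Ytil k) :
    Ytil (n + 1) =
      X *ᵥ wstar + E 1 +
        ∑ i ∈ Finset.Icc 1 n, (M i) *ᵥ (X *ᵥ (what i - wstar) + (E (i + 1) - E 1)) :=
  edited_targets_expansion_general T d n X wstar E M hMdisj Ytil what hY1 hYrec
end

section
/- Let X be a real T×d matrix with XᵀX invertible, and let M_1,…,M_n be editing matrices (T×T diagonal with 0/1 diagonal entries). Let E_1,…,E_{n+1} be mutually independent random vectors in ℝ^T, each with i.i.d. coordinates distributed N(0, σ²). Then E[ ‖(XᵀX)⁻¹ Xᵀ ( E_1 + Σ_{i=1}^{n} M_i E_{i+1} )‖² ] = σ² · tr( (XᵀX)⁻¹ ) + σ² · Σ_{i=1}^{n} tr( X (XᵀX)⁻² Xᵀ M_i ). -/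
/-!
Write `B = (XᵀX)⁻¹Xᵀ`, `N₀ = 1` and `Nₖ = Mₖ`. The vector inside the norm is `∑ₖ B Nₖ Eₖ₊₁`, so
each of its coordinates is a linear combination of the `(n + 1)T` independent `N(0, σ²)`
coordinates of the noise vectors, and the second moment of such a combination is `σ²` times
the sum of the squared coefficients. Summing over coordinates gives `σ² ∑ₖ tr(B Nₖ (B Nₖ)ᵀ)`.
Finally `B Bᵀ = (XᵀX)⁻¹`, and an editing matrix satisfies `M Mᵀ = M`, so that
`tr(B M (B M)ᵀ) = tr(Bᵀ B M) = tr(X (XᵀX)⁻² Xᵀ M)`.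
-/

open Matrix Finset MeasureTheory ProbabilityTheory

open scoped NNReal

namespace Matrix

variable {m n R : Type*} [Fintype m] [Fintype n]

lemma trace_mul_transpose_self [CommSemiring R] (A : Matrix m n R) :
    (A * Aᵀ).trace = ∑ i, ∑ j, A i j ^ 2 := by
  simp [trace, mul_apply, sq]

lemma trace_mul_mul_transpose_of_mul_transpose_self [CommSemiring R] (B : Matrix m n R)
    {P : Matrix n n R} (hP : P * Pᵀ = P) :
    (B * P * (B * P)ᵀ).trace = (Bᵀ * B * P).trace := by
  rw [transpose_mul, ← Matrix.mul_assoc, Matrix.mul_assoc B, hP, trace_mul_comm,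
    ← Matrix.mul_assoc]

variable [DecidableEq n] [CommRing R]

lemma transpose_inv_gram_mul_transpose (X : Matrix m n R) :
    ((Xᵀ * X)⁻¹ * Xᵀ)ᵀ = X * (Xᵀ * X)⁻¹ := by
  rw [transpose_mul, transpose_transpose, transpose_nonsing_inv, transpose_mul,
    transpose_transpose]

lemma inv_gram_mul_transpose_mul_transpose_self {X : Matrix m n R} (hX : IsUnit (Xᵀ * X).det) :
    (Xᵀ * X)⁻¹ * Xᵀ * ((Xᵀ * X)⁻¹ * Xᵀ)ᵀ = (Xᵀ * X)⁻¹ := by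
  rw [transpose_inv_gram_mul_transpose, Matrix.mul_assoc, ← Matrix.mul_assoc Xᵀ,
    ← Matrix.mul_assoc, nonsing_inv_mul _ hX, Matrix.one_mul]

end Matrix

lemma IsEditingMatrix.mul_transpose_self {T : ℕ} {M : Matrix (Fin T) (Fin T) ℝ}
    (hM : IsEditingMatrix M) : M * Mᵀ = M := by
  obtain ⟨f, hf, rfl⟩ := hM
  rw [diagonal_transpose, diagonal_mul_diagonal]
  congr 1
  ext t
  rcases hf t with h | h <;> simp [h]

lemma IsEditingMatrix.trace_inv_gram_mul_transpose_mul_mul_transpose {T d : ℕ}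
    {M : Matrix (Fin T) (Fin T) ℝ} (hM : IsEditingMatrix M) (X : Matrix (Fin T) (Fin d) ℝ) :
    ((Xᵀ * X)⁻¹ * Xᵀ * M * ((Xᵀ * X)⁻¹ * Xᵀ * M)ᵀ).trace =
      (X * ((Xᵀ * X)⁻¹ * (Xᵀ * X)⁻¹) * Xᵀ * M).trace := by
  rw [trace_mul_mul_transpose_of_mul_transpose_self _ hM.mul_transpose_self,
    transpose_inv_gram_mul_transpose]
  simp only [Matrix.mul_assoc]

lemma Fin.sum_univ_add_one_eq_sum_Icc {β : Type*} [AddCommMonoid β] (n : ℕ) (f : ℕ → β) :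
    ∑ i : Fin n, f (i + 1) = ∑ i ∈ Icc 1 n, f i := by
  rw [← Ico_add_one_right_eq_Icc, sum_Ico_eq_sum_range, Nat.add_sub_cancel,
    ← Fin.sum_univ_eq_sum_range]
  simp only [add_comm]

namespace ProbabilityTheory

variable {Ω : Type*} [MeasurableSpace Ω] {μ : Measure Ω}

lemma HasLaw.memLp_of_gaussianReal {Y : Ω → ℝ} {m : ℝ} {v : ℝ≥0}
    (hY : HasLaw Y (gaussianReal m v) μ) (p : ℝ≥0) : MemLp Y p μ :=
  MemLp.comp_of_map (f := Y) (g := id) (hY.map_eq ▸ memLp_id_gaussianReal p) hY.aemeasurable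

lemma integral_sq_sum_mul_of_hasLaw_gaussianReal [IsFiniteMeasure μ] {ι : Type*}
    [Fintype ι] {Y : ι → Ω → ℝ} {v : ℝ≥0} (hY : ∀ i, HasLaw (Y i) (gaussianReal 0 v) μ)
    (hindep : Pairwise fun i j => Y i ⟂ᵢ[μ] Y j) (c : ι → ℝ) :
    ∫ ω, (∑ i, c i * Y i ω) ^ 2 ∂μ = v * ∑ i, c i ^ 2 := by
  have hmem : ∀ i, MemLp (fun ω => c i * Y i ω) 2 μ := fun i =>
    (hY i).memLp_of_gaussianReal 2 |>.const_mul (c i)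
  have hmean : μ[fun ω => ∑ i, c i * Y i ω] = 0 := by
    rw [integral_finsetSum _ fun i _ => (hmem i).integrable one_le_two]
    simp [integral_const_mul, (hY _).integral_eq]
  calc ∫ ω, (∑ i, c i * Y i ω) ^ 2 ∂μ = Var[∑ i, fun ω => c i * Y i ω; μ] := by
        rw [Finset.sum_fn, variance_of_integral_eq_zero (by fun_prop) hmean]
    _ = ∑ i, Var[fun ω => c i * Y i ω; μ] :=
        IndepFun.variance_sum (fun i _ => hmem i) fun i _ j _ hij =>
          (hindep hij).comp (measurable_const_mul (c i)) (measurable_const_mul (c j))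
    _ = v * ∑ i, c i ^ 2 := by
        simp_rw [variance_const_mul, (hY _).variance_eq, variance_id_gaussianReal,
          Finset.mul_sum, mul_comm]

lemma integral_sum_sq_sum_mulVec_pi_gaussianReal {ι κ m : Type*} [Fintype ι] [Fintype κ]
    [Fintype m] (v : ℝ≥0) (A : ι → Matrix m κ ℝ) :
    ∫ y, ∑ j, (∑ i, A i *ᵥ y i) j ^ 2
        ∂(Measure.pi fun _ : ι => Measure.pi fun _ : κ => gaussianReal 0 v) =
      v * ∑ i, (A i * (A i)ᵀ).trace := by
  set P := Measure.pi fun _ : ι => Measure.pi fun _ : κ => gaussianReal 0 v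
  have hlaw : ∀ p : ι × κ, HasLaw (fun y : ι → κ → ℝ => y p.1 p.2) (gaussianReal 0 v) P :=
    fun p => ((measurePreserving_eval (fun _ : κ => gaussianReal 0 v) p.2).comp
      (measurePreserving_eval (fun _ : ι => Measure.pi fun _ : κ => gaussianReal 0 v) p.1)).hasLaw
  have hindep : iIndepFun (fun (p : ι × κ) (y : ι → κ → ℝ) => y p.1 p.2) P := by
    simpa only [Measure.infinitePi_eq_pi, id] using
      iIndepFun_uncurry_infinitePi' (fun (_ : ι) (_ : κ) => gaussianReal 0 v)
        (X := fun _ _ => id) fun _ _ => measurable_id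
  have hcoord : ∀ (y : ι → κ → ℝ) j,
      (∑ i, A i *ᵥ y i) j = ∑ p : ι × κ, A p.1 j p.2 * y p.1 p.2 := by
    intro y j
    simp [mulVec, dotProduct, Fintype.sum_prod_type]
  simp_rw [hcoord]
  rw [integral_finsetSum _ fun j _ => (memLp_finsetSum _ fun p _ =>
    ((hlaw p).memLp_of_gaussianReal 2 |>.const_mul _)).integrable_sq]
  simp_rw [integral_sq_sum_mul_of_hasLaw_gaussianReal hlaw fun _ _ => hindep.indepFun,
    trace_mul_transpose_self, ← Finset.mul_sum, Fintype.sum_prod_type]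
  rw [Finset.sum_comm]

end ProbabilityTheory

theorem expected_sq_norm_edited_noise_general
    (T d n : ℕ) (σ : ℝ)
    (X : Matrix (Fin T) (Fin d) ℝ) (hX : IsUnit (Xᵀ * X).det)
    (M : ℕ → Matrix (Fin T) (Fin T) ℝ)
    (hM : ∀ i, 1 ≤ i → i ≤ n → IsEditingMatrix (M i))
    {Ω : Type*} [MeasureSpace Ω]
    (E : ℕ → Ω → Fin T → ℝ)
    (hElaw : Measure.map (fun ω (i : Fin (n + 1)) => E (i.1 + 1) ω) ℙ =
      Measure.pi fun _ : Fin (n + 1) =>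
        Measure.pi fun _ : Fin T => gaussianReal 0 ⟨σ ^ 2, sq_nonneg σ⟩) :
    ∫ ω, ∑ j, ((Xᵀ * X)⁻¹ *ᵥ (Xᵀ *ᵥ
        (E 1 ω + ∑ i ∈ Finset.Icc 1 n, (M i) *ᵥ E (i + 1) ω))) j ^ 2 ∂ℙ =
      σ ^ 2 * ((Xᵀ * X)⁻¹).trace +
        σ ^ 2 * ∑ i ∈ Finset.Icc 1 n,
          (X * ((Xᵀ * X)⁻¹ * (Xᵀ * X)⁻¹) * Xᵀ * M i).trace := by
  -- Naming the variance lets instance search see it at type `ℝ≥0` rather than as a subtype.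
  set v : ℝ≥0 := ⟨σ ^ 2, sq_nonneg σ⟩
  set B := (Xᵀ * X)⁻¹ * Xᵀ
  set N : Fin (n + 1) → Matrix (Fin T) (Fin T) ℝ := Fin.cons 1 fun i => M (i + 1)
  -- `Measure.map` of a map that is not a.e.-measurable is `0`, so `hElaw` forces measurability.
  have hlaw : HasLaw (fun ω (i : Fin (n + 1)) => E (i.1 + 1) ω) _ ℙ :=
    ⟨.of_map_ne_zero (hElaw ▸ IsProbabilityMeasure.ne_zero _), hElaw⟩
  have hnoise : ∀ ω, (Xᵀ * X)⁻¹ *ᵥ (Xᵀ *ᵥ (E 1 ω + ∑ i ∈ Icc 1 n, M i *ᵥ E (i + 1) ω)) =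
      ∑ k : Fin (n + 1), (B * N k) *ᵥ E (k.1 + 1) ω := by
    intro ω
    simp [Fin.sum_univ_succ, N, B, ← Fin.sum_univ_add_one_eq_sum_Icc, mulVec_add, mulVec_sum,
      mulVec_mulVec, Matrix.mul_assoc]
  have hedit : ∀ i : Fin n, ((B * M (i + 1)) * (B * M (i + 1))ᵀ).trace =
      (X * ((Xᵀ * X)⁻¹ * (Xᵀ * X)⁻¹) * Xᵀ * M (i + 1)).trace := fun i =>
    (hM _ (by omega) (by omega)).trace_inv_gram_mul_transpose_mul_mul_transpose X
  have hB : B * Bᵀ = (Xᵀ * X)⁻¹ := inv_gram_mul_transpose_mul_transpose_self hX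
  simp_rw [hnoise]
  rw [← Function.comp_def (fun y : Fin (n + 1) → Fin T → ℝ => ∑ j, (∑ k, (B * N k) *ᵥ y k) j ^ 2),
    hlaw.integral_comp (Continuous.aestronglyMeasurable (by fun_prop)),
    integral_sum_sq_sum_mulVec_pi_gaussianReal, Fin.sum_univ_succ]
  simp only [N, Fin.cons_zero, Fin.cons_succ, Matrix.mul_one, hB, hedit,
    Fin.sum_univ_add_one_eq_sum_Icc n fun i => (X * ((Xᵀ * X)⁻¹ * (Xᵀ * X)⁻¹) * Xᵀ * M i).trace,
    mul_add]
  rfl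

/-- for `X` with `XᵀX` invertible, editing matrices `M 1, …, M n`, and mutually
independent random vectors `E 1, …, E (n+1)` in `ℝ^T` with i.i.d. `N(0,σ²)` coordinates
(mutual independence with the given marginals is expressed by saying that the joint law of the
family is the corresponding product measure), one has
`𝔼[‖(XᵀX)⁻¹ Xᵀ (E 1 + ∑_{i=1}^n M i E (i+1))‖²]
  = σ² tr((XᵀX)⁻¹) + σ² ∑_{i=1}^n tr(X (XᵀX)⁻² Xᵀ M i)`. -/
theorem expected_sq_norm_edited_noise
    (T d n : ℕ) (hT : 0 < T) (hd : 0 < d) (hn : 0 < n) (σ : ℝ) (hσ : 0 < σ)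
    (X : Matrix (Fin T) (Fin d) ℝ) (hX : IsUnit (Xᵀ * X).det)
    (M : ℕ → Matrix (Fin T) (Fin T) ℝ)
    (hM : ∀ i, 1 ≤ i → i ≤ n → IsEditingMatrix (M i))
    {Ω : Type*} [MeasureSpace Ω] [IsProbabilityMeasure (ℙ : Measure Ω)]
    (E : ℕ → Ω → Fin T → ℝ)
    (hEmeas : ∀ i, 1 ≤ i → i ≤ n + 1 → Measurable (E i))
    (hElaw : Measure.map (fun ω (i : Fin (n + 1)) => E (i.1 + 1) ω) ℙ =
      Measure.pi fun _ : Fin (n + 1) =>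
        Measure.pi fun _ : Fin T => gaussianReal 0 ⟨σ ^ 2, sq_nonneg σ⟩) :
    ∫ ω, ∑ j, ((Xᵀ * X)⁻¹ *ᵥ (Xᵀ *ᵥ
        (E 1 ω + ∑ i ∈ Finset.Icc 1 n, (M i) *ᵥ E (i + 1) ω))) j ^ 2 ∂ℙ =
      σ ^ 2 * ((Xᵀ * X)⁻¹).trace +
        σ ^ 2 * ∑ i ∈ Finset.Icc 1 n,
          (X * ((Xᵀ * X)⁻¹ * (Xᵀ * X)⁻¹) * Xᵀ * M i).trace :=
  expected_sq_norm_edited_noise_general T d n σ X hX M hM E hElaw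
end
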